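/- arXiv:1006.3877 — 2 statements merged into one kernel-verified Lean document; each statement's English description precedes it below -/
import Mathlib

section
/- Let G = Sp(m) be the compact symplectic group (type C_m), realized as the group of m × m quaternionic unitary matrices. Every finite tuple (x₁, …, x_n) of pairwise commuting elements of G can be simultaneously conjugated into a fixed maximal torus of G. -/
/-!
Let `ℂ` act on `ℍ^m` from the right. Quaternionic matrices act from the left, so they are
`ℂ`-linear, and commuting ones have a common eigenvector `v`, with `A v = v c` for a complex `c`.
A matrix in `Sp(m)` preserves the form `u* v`, so it also preserves the orthogonal complement
of a unit eigenvector of it. Hence the common unit eigenvectors can be chosen one at a time,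
each orthogonal to the previous ones: as long as there are fewer than `m` of them, their
orthogonal complement is a nonzero `ℂ`-subspace (of complex codimension at most `2k < 2m`)
that is invariant under all the `A i`. The `m` orthonormal vectors so obtained are the columns
of a matrix in `Sp(m)` that conjugates every `A i` to the diagonal matrix of its complex
eigenvalues, and these have modulus one because the conjugate is again in `Sp(m)`.
-/

open scoped Quaternion

/-- The compact symplectic group `Sp(m)` (type `C_m`), realized as the group of
`m × m` quaternionic matrices `A` with `A* A = 1`. -/
def SpGroup (m : ℕ) : Type :=
  unitary (Matrix (Fin m) (Fin m) ℍ[ℝ])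

noncomputable instance (m : ℕ) : Group (SpGroup m) :=
  inferInstanceAs (Group (unitary (Matrix (Fin m) (Fin m) ℍ[ℝ])))

/-- `A` belongs to the fixed maximal torus of `Sp(m)`: the underlying matrix is
diagonal and its diagonal entries are complex numbers (quaternions with vanishing
`j`- and `k`-parts) of modulus one. -/
def SpGroup.InTorus {m : ℕ} (A : SpGroup m) : Prop :=
  (A.1 : Matrix (Fin m) (Fin m) ℍ[ℝ]).IsDiag ∧
    ∀ p : Fin m, (A.1 p p).imJ = 0 ∧ (A.1 p p).imK = 0 ∧ ‖A.1 p p‖ = 1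

open Quaternion Matrix

theorem Module.End.exists_common_eigenvector_mem {K V ι : Type*} [Field K] [IsAlgClosed K]
    [AddCommGroup V] [Module K V] [FiniteDimensional K V] [Finite ι]
    (f : ι → Module.End K V) (hf : ∀ i j, Commute (f i) (f j))
    {p : Submodule K V} (hp : p ≠ ⊥) (hfp : ∀ i, ∀ v ∈ p, f i v ∈ p) :
    ∃ χ : ι → K, ∃ v ∈ p, v ≠ 0 ∧ ∀ i, f i v = χ i • v := by
  classical
  cases nonempty_fintype ι
  suffices ∀ s : Finset ι, ∀ p : Submodule K V, p ≠ ⊥ → (∀ i, ∀ v ∈ p, f i v ∈ p) →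
      ∃ v ∈ p, v ≠ 0 ∧ ∀ i ∈ s, ∃ c : K, f i v = c • v by
    obtain ⟨v, hv, hv0, hχ⟩ := this Finset.univ p hp hfp
    choose χ hχ using fun i => hχ i (Finset.mem_univ i)
    exact ⟨χ, v, hv, hv0, hχ⟩
  intro s
  induction s using Finset.induction_on with
  | empty =>
    intro p hp _
    obtain ⟨v, hv, hv0⟩ := Submodule.exists_mem_ne_zero_of_ne_bot hp
    exact ⟨v, hv, hv0, by simp⟩
  | insert j s _ ih =>
    intro p hp hfp
    have : Nontrivial p := Submodule.nontrivial_iff_ne_bot.mpr hp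
    obtain ⟨μ, hμ⟩ := Module.End.exists_eigenvalue ((f j).restrict (hfp j))
    obtain ⟨w, hw, hw0⟩ := hμ.exists_hasEigenvector
    have hwμ : (w : V) ∈ p ⊓ (f j).eigenspace μ :=
      ⟨w.2, Module.End.eigenspace_restrict_le_eigenspace (f j) (hfp j) μ ⟨w, hw, rfl⟩⟩
    obtain ⟨v, ⟨hvp, hvμ⟩, hv0, hvs⟩ := ih (p ⊓ (f j).eigenspace μ)
      (Submodule.ne_bot_iff _ |>.mpr ⟨w, hwμ, by simpa using hw0⟩)
      (fun i u hu => ⟨hfp i u hu.1, Module.End.mapsTo_genEigenspace_of_comm (hf j i) μ 1 hu.2⟩)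
    exact ⟨v, hvp, hv0, Finset.forall_mem_insert _ _ _ |>.mpr
      ⟨⟨μ, Module.End.mem_eigenspace_iff.mp hvμ⟩, hvs⟩⟩

theorem Matrix.star_mulVec_dotProduct_mulVec {n R : Type*} [Fintype n] [DecidableEq n]
    [Semiring R] [StarRing R] {A : Matrix n n R} (hA : star A * A = 1) (u v : n → R) :
    star (A *ᵥ u) ⬝ᵥ (A *ᵥ v) = star u ⬝ᵥ v := by
  rw [star_mulVec, dotProduct_mulVec, vecMul_vecMul, ← star_eq_conjTranspose, hA, vecMul_one]

namespace Quaternion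

/-- `ℂ` acting on `ℍ` by right multiplication. -/
noncomputable abbrev rightComplexModule : Module ℂ ℍ[ℝ] :=
  Module.compHom ℍ[ℝ] (ofComplex.toOpposite fun x y => (Commute.all x y).map ofComplex).toRingHom

attribute [local instance] rightComplexModule

theorem complex_smul_eq_mul (c : ℂ) (q : ℍ[ℝ]) : c • q = q * c := rfl

instance : SMulCommClass ℂ ℍ[ℝ] ℍ[ℝ] := ⟨fun c a b => mul_assoc a b c⟩

instance : IsScalarTower ℝ ℂ ℍ[ℝ] := ⟨fun r c q => by
  rw [complex_smul_eq_mul, complex_smul_eq_mul]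
  ext <;> simp <;> ring⟩

instance : Module.Finite ℂ ℍ[ℝ] := Module.Finite.of_restrictScalars_finite ℝ ℂ ℍ[ℝ]

variable {n : Type*} [Fintype n]

theorem star_dotProduct_self (v : n → ℍ[ℝ]) :
    star v ⬝ᵥ v = ((∑ s, normSq (v s) : ℝ) : ℍ[ℝ]) := by
  simp only [dotProduct, Pi.star_apply, star_mul_self]
  exact (map_sum (algebraMap ℝ ℍ[ℝ]) _ _).symm

theorem exists_smul_star_dotProduct_self_eq_one {v : n → ℍ[ℝ]} (hv : v ≠ 0) :
    ∃ t : ℝ, star (t • v) ⬝ᵥ (t • v) = 1 := by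
  obtain ⟨s, hs⟩ := Function.ne_iff.mp hv
  set r := ∑ s, normSq (v s)
  have hr : 0 < r := Finset.sum_pos' (fun s _ => normSq_nonneg)
    ⟨s, Finset.mem_univ s, normSq_nonneg.lt_of_ne' (normSq_ne_zero.mpr hs)⟩
  refine ⟨(√r)⁻¹, ?_⟩
  have hstar : star ((√r)⁻¹ • v) = (√r)⁻¹ • star v := funext fun s => Quaternion.star_smul _ _
  rw [hstar, smul_dotProduct, dotProduct_smul, star_dotProduct_self, smul_coe, smul_coe,
    ← coe_one, coe_inj]
  field_simp
  rw [Real.sq_sqrt hr.le]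

theorem star_complex_smul_dotProduct (c : ℂ) (u v : n → ℍ[ℝ]) :
    star (c • u) ⬝ᵥ v = star (c : ℍ[ℝ]) * (star u ⬝ᵥ v) := by
  simp only [dotProduct, Finset.mul_sum, Pi.star_apply, Pi.smul_apply, complex_smul_eq_mul,
    star_mul, mul_assoc]

theorem star_dotProduct_mulVec_eq_zero_of_mulVec_eq_smul [DecidableEq n] {A : Matrix n n ℍ[ℝ]}
    (hA : star A * A = 1) {u v : n → ℍ[ℝ]} {c : ℂ} (hu : star u ⬝ᵥ u = 1) (hAu : A *ᵥ u = c • u)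
    (huv : star u ⬝ᵥ v = 0) : star u ⬝ᵥ (A *ᵥ v) = 0 := by
  have hc : star (c : ℍ[ℝ]) ≠ 0 := by
    intro hc
    have := star_mulVec_dotProduct_mulVec hA u u
    rw [hAu, star_complex_smul_dotProduct, hc, zero_mul, hu] at this
    exact zero_ne_one this
  have := star_mulVec_dotProduct_mulVec hA u v
  rw [hAu, huv, star_complex_smul_dotProduct] at this
  exact (mul_eq_zero.mp this).resolve_left hc

noncomputable def complexMulVecLin {m : Type*} (A : Matrix m n ℍ[ℝ]) :
    (n → ℍ[ℝ]) →ₗ[ℂ] (m → ℍ[ℝ]) where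
  toFun := A.mulVec
  map_add' := A.mulVec_add
  map_smul' := A.mulVec_smul

variable {ι : Type*} [Finite ι] {m : ℕ} {A : ι → Matrix (Fin m) (Fin m) ℍ[ℝ]}

theorem exists_unit_common_eigenvector_orthogonal (hA : ∀ i, star (A i) * A i = 1)
    (hcomm : ∀ i j, Commute (A i) (A j)) {k : ℕ} (hk : k < m) (u : Fin k → Fin m → ℍ[ℝ])
    (hu : ∀ a, star (u a) ⬝ᵥ u a = 1) (hAu : ∀ i a, ∃ c : ℂ, A i *ᵥ u a = c • u a) :
    ∃ v : Fin m → ℍ[ℝ], star v ⬝ᵥ v = 1 ∧ (∀ a, star (u a) ⬝ᵥ v = 0) ∧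
      ∀ i, ∃ c : ℂ, A i *ᵥ v = c • v := by
  set W := LinearMap.ker (complexMulVecLin (Matrix.of fun a s => star (u a s)))
  have hW : ∀ v, v ∈ W ↔ ∀ a, star (u a) ⬝ᵥ v = 0 := fun v => funext_iff
  have hW_ne_bot : W ≠ ⊥ := LinearMap.ker_ne_bot_of_finrank_lt <| by
    simp only [Module.finrank_pi_fintype, Finset.sum_const, Finset.card_univ, Fintype.card_fin,
      smul_eq_mul]
    exact Nat.mul_lt_mul_of_pos_right hk Module.finrank_pos
  obtain ⟨χ, v, hvW, hv0, hχ⟩ := Module.End.exists_common_eigenvector_mem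
    (fun i => complexMulVecLin (A i))
    (fun i j => LinearMap.ext fun v => by simp [complexMulVecLin, mulVec_mulVec, (hcomm i j).eq])
    hW_ne_bot
    (fun i w hw => (hW _).mpr fun a =>
      have ⟨c, hc⟩ := hAu i a
      star_dotProduct_mulVec_eq_zero_of_mulVec_eq_smul (hA i) (hu a) hc ((hW w).mp hw a))
  obtain ⟨t, ht⟩ := exists_smul_star_dotProduct_self_eq_one hv0
  refine ⟨t • v, ht, fun a => ?_, fun i => ⟨χ i, ?_⟩⟩
  · rw [dotProduct_smul, (hW v).mp hvW a, smul_zero]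
  · rw [mulVec_smul]
    exact (congrArg (t • ·) (hχ i)).trans (smul_comm _ _ _)

theorem exists_orthonormal_common_eigenvectors (hA : ∀ i, star (A i) * A i = 1)
    (hcomm : ∀ i j, Commute (A i) (A j)) {k : ℕ} (hk : k ≤ m) :
    ∃ u : Fin k → Fin m → ℍ[ℝ], (∀ a b, star (u a) ⬝ᵥ u b = if a = b then 1 else 0) ∧
      ∀ i a, ∃ c : ℂ, A i *ᵥ u a = c • u a := by
  induction k with
  | zero => exact ⟨Fin.elim0, fun a => a.elim0, fun _ a => a.elim0⟩
  | succ k ih =>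
    obtain ⟨u, hu, hAu⟩ := ih (by omega)
    obtain ⟨v, hv, huv, hAv⟩ := exists_unit_common_eigenvector_orthogonal hA hcomm hk u
      (fun a => by simpa using hu a a) hAu
    have hvu : ∀ a, star v ⬝ᵥ u a = 0 := fun a => by rw [star_dotProduct, huv, star_zero]
    refine ⟨Fin.snoc u v, fun a b => ?_, fun i a => ?_⟩
    · induction a using Fin.lastCases <;> induction b using Fin.lastCases <;>
        simp [hu, huv, hvu, hv, Fin.castSucc_ne_last, (Fin.castSucc_ne_last _).symm]
    · induction a using Fin.lastCases <;> simp [hAu, hAv]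

theorem exists_mem_unitary_mul_mul_star_eq_diagonal
    (hA : ∀ i, A i ∈ unitary (Matrix (Fin m) (Fin m) ℍ[ℝ]))
    (hcomm : ∀ i j, Commute (A i) (A j)) :
    ∃ U ∈ unitary (Matrix (Fin m) (Fin m) ℍ[ℝ]),
      ∀ i, ∃ d : Fin m → ℂ, U * A i * star U = diagonal fun p => (d p : ℍ[ℝ]) := by
  obtain ⟨u, hu, hAu⟩ := exists_orthonormal_common_eigenvectors
    (fun i => Unitary.star_mul_self_of_mem (hA i)) hcomm le_rfl
  choose d hd using hAu
  set V : Matrix (Fin m) (Fin m) ℍ[ℝ] := of fun s a => u a s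
  have hV : star V * V = 1 := by
    refine Matrix.ext fun a b => ?_
    simpa [V, mul_apply, dotProduct, one_apply] using hu a b
  have hAV : ∀ i, A i * V = V * diagonal fun p => (d i p : ℍ[ℝ]) := fun i => by
    refine Matrix.ext fun s a => ?_
    rw [mul_diagonal]
    simpa [V, mul_apply, mulVec, dotProduct, complex_smul_eq_mul] using congrFun (hd i a) s
  refine ⟨star V, Unitary.mem_iff.mpr ⟨?_, ?_⟩, fun i => ⟨d i, ?_⟩⟩
  · rw [star_star]; exact mul_eq_one_comm.mp hV
  · rwa [star_star]
  · rw [star_star, mul_assoc, hAV, ← mul_assoc, hV, one_mul]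

end Quaternion

theorem SpGroup.inTorus_of_val_eq_diagonal {m : ℕ} {A : SpGroup m} {d : Fin m → ℂ}
    (hA : A.1 = diagonal fun p => (d p : ℍ[ℝ])) : A.InTorus := by
  refine ⟨hA ▸ isDiag_diagonal _, fun p => ?_⟩
  have hunit : (star A.1 * A.1 : Matrix (Fin m) (Fin m) ℍ[ℝ]) p p = 1 := by
    rw [Unitary.star_mul_self_of_mem A.2, one_apply_eq]
  rw [hA, star_eq_conjTranspose, diagonal_conjTranspose, diagonal_mul_diagonal, diagonal_apply_eq,
    Pi.star_apply] at hunit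
  have hnorm := congrArg norm hunit
  rw [CStarRing.norm_star_mul_self, norm_one, mul_self_eq_one_iff] at hnorm
  rw [hA, diagonal_apply_eq]
  exact ⟨imJ_coeComplex _, imK_coeComplex _,
    hnorm.resolve_right (by linarith [norm_nonneg (d p : ℍ[ℝ])])⟩

/-- In the compact symplectic group `G = Sp(m)` (type `C_m`), every finite tuple
of pairwise commuting elements can be simultaneously conjugated into the fixed
maximal torus of diagonal matrices with complex entries of modulus one. -/
theorem sp_commuting_tuple_simultaneously_conjugated_into_torus
    (m n : ℕ) (x : Fin n → SpGroup m)
    (hcomm : ∀ i j, x i * x j = x j * x i) :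
    ∃ g : SpGroup m, ∀ i, SpGroup.InTorus (g * x i * g⁻¹) := by
  obtain ⟨U, hU, hdiag⟩ := exists_mem_unitary_mul_mul_star_eq_diagonal (fun i => (x i).2)
    fun i j => congrArg Subtype.val (hcomm i j)
  refine ⟨⟨U, hU⟩, fun i => ?_⟩
  obtain ⟨d, hd⟩ := hdiag i
  exact SpGroup.inTorus_of_val_eq_diagonal hd
end

section
/- Let G₁ and G₂ be groups, F an abelian group with injective homomorphisms ι₁ : F → Z(G₁) and ι₂ : F → Z(G₂) into their centers, N = {(ι₁(f), ι₂(f)⁻¹) : f ∈ F} the antidiagonal central subgroup of G₁ × G₂, and π : G₁ × G₂ → (G₁ × G₂)/N =: G₁ ×_F G₂ the quotient map. Then for any (a, b) ∈ G₁ × G₂: (i) the preimage π⁻¹(Z_{G₁ ×_F G₂}(π(a, b))) equals {(c, d) ∈ G₁ × G₂ : ∃ f ∈ F, [a, c] = ι₁(f) and [b, d] = ι₂(f)⁻¹}; (ii) consequently π(Z_{G₁}(a) × Z_{G₂}(b)) is a normal subgroup of Z_{G₁ ×_F G₂}(π(a, b)) and the quotient group embeds into F via the map sending the class of π(c, d)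 to the f with [a, c] = ι₁(f). -/
/-- Centralizers in an almost direct product `G₁ ×_F G₂ = (G₁ × G₂)/N`, where `N`
is the antidiagonal central subgroup `{(ι₁ f, ι₂ f⁻¹) : f ∈ F}`.
For `(a, b) ∈ G₁ × G₂`:
(i) the preimage under `π` of the centralizer of `π (a, b)` consists of the pairs
`(c, d)` with `[a, c] = ι₁ f` and `[b, d] = (ι₂ f)⁻¹` for some `f ∈ F` (here
`[x, y] = x⁻¹y⁻¹xy`); and
(ii) there is a homomorphism `e` from the centralizer of `π (a, b)` to `F`,
sending the class of `π (c, d)` to the `f` with `[a, c] = ι₁ f`, whose kernel is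
exactly `π (Z_{G₁}(a) × Z_{G₂}(b))`; hence that image is a normal subgroup of the
centralizer and the quotient by it embeds into `F`
(the exact sequence `1 → F → Z([a,b]) → Z_{G₁}(a) ×_F Z_{G₂}(b) → F`). -/
theorem centralizer_in_almost_direct_product
    {G₁ G₂ F : Type*} [Group G₁] [Group G₂] [CommGroup F]
    (ι₁ : F →* G₁) (ι₂ : F →* G₂)
    (h₁ : Function.Injective ι₁) (h₂ : Function.Injective ι₂)
    (hc₁ : ∀ f, ι₁ f ∈ Subgroup.center G₁) (hc₂ : ∀ f, ι₂ f ∈ Subgroup.center G₂)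
    (N : Subgroup (G₁ × G₂)) [N.Normal]
    (hN : ∀ p : G₁ × G₂, p ∈ N ↔ ∃ f : F, p = (ι₁ f, (ι₂ f)⁻¹))
    (a : G₁) (b : G₂) :
    (QuotientGroup.mk' N) ⁻¹'
        (Subgroup.centralizer {QuotientGroup.mk' N (a, b)} : Set ((G₁ × G₂) ⧸ N)) =
      {p : G₁ × G₂ | ∃ f : F,
        a⁻¹ * p.1⁻¹ * a * p.1 = ι₁ f ∧ b⁻¹ * p.2⁻¹ * b * p.2 = (ι₂ f)⁻¹} ∧
    ∃ e : ↥(Subgroup.centralizer {QuotientGroup.mk' N (a, b)}) →* F,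
      e.ker = (((Subgroup.centralizer {a}).prod (Subgroup.centralizer {b})).map
          (QuotientGroup.mk' N)).subgroupOf
            (Subgroup.centralizer {QuotientGroup.mk' N (a, b)}) ∧
      ∀ (c : G₁) (d : G₂)
        (h : QuotientGroup.mk' N (c, d) ∈
          Subgroup.centralizer {QuotientGroup.mk' N (a, b)}) (f : F),
        a⁻¹ * c⁻¹ * a * c = ι₁ f → e ⟨QuotientGroup.mk' N (c, d), h⟩ = f := by
  classical
  have hcomm₁ : ∀ (f : F) (g : G₁), ι₁ f * g = g * ι₁ f := fun f g =>
    ((Subgroup.mem_center_iff.mp (hc₁ f)) g).symm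
  have hcomm₂ : ∀ (f : F) (g : G₂), ι₂ f * g = g * ι₂ f := fun f g =>
    ((Subgroup.mem_center_iff.mp (hc₂ f)) g).symm
  -- membership characterization
  have hmem : ∀ p : G₁ × G₂,
      QuotientGroup.mk' N p ∈ Subgroup.centralizer {QuotientGroup.mk' N (a, b)} ↔
      ∃ f : F, a⁻¹ * p.1⁻¹ * a * p.1 = ι₁ f ∧ b⁻¹ * p.2⁻¹ * b * p.2 = (ι₂ f)⁻¹ := by
    intro p
    rw [Subgroup.mem_centralizer_singleton_iff, ← map_mul, ← map_mul,
      QuotientGroup.mk'_apply, QuotientGroup.mk'_apply, QuotientGroup.eq]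
    have hkey : (p * (a, b))⁻¹ * ((a, b) * p) =
        (a⁻¹ * p.1⁻¹ * a * p.1, b⁻¹ * p.2⁻¹ * b * p.2) := by
      ext <;> simp [mul_assoc]
    rw [hkey, hN]
    constructor
    · rintro ⟨f, hf⟩
      exact ⟨f, congrArg Prod.fst hf, congrArg Prod.snd hf⟩
    · rintro ⟨f, hf1, hf2⟩
      exact ⟨f, Prod.ext hf1 hf2⟩
  -- the commutator with a depends only on the class mod N
  have huniq : ∀ p q : G₁ × G₂, QuotientGroup.mk' N p = QuotientGroup.mk' N q →
      a⁻¹ * p.1⁻¹ * a * p.1 = a⁻¹ * q.1⁻¹ * a * q.1 := by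
    intro p q hpq
    rw [QuotientGroup.mk'_apply, QuotientGroup.mk'_apply, QuotientGroup.eq, hN] at hpq
    obtain ⟨f, hf⟩ := hpq
    have hq1 : q.1 = p.1 * ι₁ f := by
      have h' : p.1⁻¹ * q.1 = ι₁ f := congrArg Prod.fst hf
      rw [← h', mul_inv_cancel_left]
    rw [hq1]
    have : a⁻¹ * (p.1 * ι₁ f)⁻¹ * a * (p.1 * ι₁ f)
        = a⁻¹ * ((ι₁ f)⁻¹ * (p.1⁻¹ * a * p.1 * ι₁ f)) := by group
    rw [this, ← hcomm₁ f (p.1⁻¹ * a * p.1)]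
    group
  set S := Subgroup.centralizer {QuotientGroup.mk' N (a, b)} with hS
  have hsel : ∀ x : S, ∃ f : F,
      a⁻¹ * (x : (G₁ × G₂) ⧸ N).out.1⁻¹ * a * (x : (G₁ × G₂) ⧸ N).out.1 = ι₁ f ∧
      b⁻¹ * (x : (G₁ × G₂) ⧸ N).out.2⁻¹ * b * (x : (G₁ × G₂) ⧸ N).out.2 = (ι₂ f)⁻¹ := by
    intro x
    apply (hmem _).mp
    rw [QuotientGroup.mk'_apply, QuotientGroup.out_eq']
    exact x.2
  set raw : S → F := fun x => (hsel x).choose with hraw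
  have rawspec : ∀ (x : S) (p : G₁ × G₂) (f : F),
      QuotientGroup.mk' N p = (x : (G₁ × G₂) ⧸ N) →
      a⁻¹ * p.1⁻¹ * a * p.1 = ι₁ f → raw x = f := by
    intro x p f hp hf
    apply h₁
    have h1 := (hsel x).choose_spec.1
    have h2 : QuotientGroup.mk' N p =
        QuotientGroup.mk' N (x : (G₁ × G₂) ⧸ N).out := by
      rw [hp, QuotientGroup.mk'_apply, QuotientGroup.out_eq']
    rw [← h1, ← huniq p _ h2, hf]
  -- raw is multiplicative
  have rawmul : ∀ x y : S, raw (x * y) = raw x * raw y := by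
    intro x y
    set p := (x : (G₁ × G₂) ⧸ N).out with hp
    set q := (y : (G₁ × G₂) ⧸ N).out with hq
    have hx1 := (hsel x).choose_spec.1
    have hy1 := (hsel y).choose_spec.1
    have hx1' : a⁻¹ * p.1⁻¹ * a * p.1 = ι₁ (raw x) := hx1
    have hy1' : a⁻¹ * q.1⁻¹ * a * q.1 = ι₁ (raw y) := hy1
    apply rawspec (x * y) (p * q)
    · have e1 : QuotientGroup.mk' N p = (x : (G₁ × G₂) ⧸ N) := by
        rw [QuotientGroup.mk'_apply, hp, QuotientGroup.out_eq']
      have e2 : QuotientGroup.mk' N q = (y : (G₁ × G₂) ⧸ N) := by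
        rw [QuotientGroup.mk'_apply, hq, QuotientGroup.out_eq']
      rw [map_mul, e1, e2]
      rfl
    · have hpa : p.1⁻¹ * a * p.1 = a * ι₁ (raw x) := by
        have : a * (a⁻¹ * p.1⁻¹ * a * p.1) = a * ι₁ (raw x) := by rw [hx1']
        rw [← this]; group
      have : a⁻¹ * (p * q).1⁻¹ * a * (p * q).1
          = a⁻¹ * q.1⁻¹ * (p.1⁻¹ * a * p.1) * q.1 := by
        simp only [Prod.fst_mul]; group
      rw [this, hpa]
      rw [show a⁻¹ * q.1⁻¹ * (a * ι₁ (raw x)) * q.1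
          = a⁻¹ * q.1⁻¹ * a * (ι₁ (raw x) * q.1) by group,
        hcomm₁ (raw x) q.1,
        show a⁻¹ * q.1⁻¹ * a * (q.1 * ι₁ (raw x))
          = (a⁻¹ * q.1⁻¹ * a * q.1) * ι₁ (raw x) by group,
        hy1', ← map_mul, mul_comm (raw y) (raw x)]
  have rawone : raw 1 = 1 := by
    apply rawspec 1 1 1
    · simp
    · simp
  refine ⟨?_, ⟨{ toFun := raw, map_one' := rawone, map_mul' := rawmul }, ?_, ?_⟩⟩
  · ext p
    simpa using hmem p
  · ext x
    rw [MonoidHom.mem_ker, Subgroup.mem_subgroupOf]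
    simp only [MonoidHom.coe_mk, OneHom.coe_mk]
    constructor
    · intro hx
      set p := (x : (G₁ × G₂) ⧸ N).out with hp
      have hx1 : a⁻¹ * p.1⁻¹ * a * p.1 = 1 := by
        have h' := (hsel x).choose_spec.1
        rw [show (hsel x).choose = raw x from rfl, hx, map_one] at h'
        exact h'
      have hx2 : b⁻¹ * p.2⁻¹ * b * p.2 = 1 := by
        have h' := (hsel x).choose_spec.2
        rw [show (hsel x).choose = raw x from rfl, hx, map_one, inv_one] at h'
        exact h'
      refine Subgroup.mem_map.mpr ⟨p, Subgroup.mem_prod.mpr ⟨?_, ?_⟩, ?_⟩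
      · rw [Subgroup.mem_centralizer_singleton_iff]
        calc p.1 * a = p.1 * a * (a⁻¹ * p.1⁻¹ * a * p.1) := by rw [hx1]; group
        _ = a * p.1 := by group
      · rw [Subgroup.mem_centralizer_singleton_iff]
        calc p.2 * b = p.2 * b * (b⁻¹ * p.2⁻¹ * b * p.2) := by rw [hx2]; group
        _ = b * p.2 := by group
      · rw [QuotientGroup.mk'_apply, hp, QuotientGroup.out_eq']
    · intro hx
      obtain ⟨p, hp, hpx⟩ := Subgroup.mem_map.mp hx
      obtain ⟨hp1, hp2⟩ := Subgroup.mem_prod.mp hp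
      apply rawspec x p 1 hpx
      rw [map_one]
      have := Subgroup.mem_centralizer_singleton_iff.mp hp1
      rw [show a⁻¹ * p.1⁻¹ * a * p.1 = a⁻¹ * p.1⁻¹ * (a * p.1) by group, ← this]
      group
  · intro c d h f hf
    exact rawspec ⟨QuotientGroup.mk' N (c, d), h⟩ (c, d) f rfl hf
end
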